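/- arXiv:2506.21846 — 2 statements merged into one kernel-verified Lean document; each statement's English description precedes it below -/
import Mathlib

section
/- Let V ⊆ ℝ^(n-1) be a connected topological submanifold, let π : ℝ^n → ℝ^(n-1) be the projection forgetting the last coordinate, and let C₁, C₂ be graphs of continuous functions f₁, f₂ : V → ℝ with f₁ < f₂ pointwise. Let X be a connected subset of ℝ^n such that π(X) is a proper open subset of V and f₁(π(x)) < x_n < f₂(π(x)) for all x ∈ X (writing x_n for the last coordinate). Then the frontier of π(X) meets V, and for every point a in frontier(π(X)) ∩ V there exists y in the frontier of X with π(y) = a and f₁(a) ≤ y_n ≤ f₂(a). -/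
open Set Topology

/-- Projection forgetting the last coordinate. -/
def projLast (n : ℕ) : (Fin (n+1) → ℝ) → (Fin n → ℝ) := fun x i => x i.castSucc

/-- An open box in ℝⁿ: a product of open intervals. -/
def IsOpenBox {n : ℕ} (B : Set (Fin n → ℝ)) : Prop :=
  ∃ a b : Fin n → ℝ, B = {x | ∀ i, x i ∈ Set.Ioo (a i) (b i)}

/-- `f` restricted to `s` is a homeomorphism onto `t`. -/
def IsHomeoOn {α β : Type*} [TopologicalSpace α] [TopologicalSpace β]
    (f : α → β) (s : Set α) (t : Set β) : Prop :=
  Set.BijOn f s t ∧ ContinuousOn f s ∧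
    ∃ g : β → α, ContinuousOn g t ∧ ∀ x ∈ s, g (f x) = x

/-- A pseudo-special subset of ℝ^(n+1): each point has an open box neighborhood on which
the projection forgetting the last coordinate is a homeomorphism onto `π(B) ∩ π(M)`. -/
def PseudoSpecial {n : ℕ} (M : Set (Fin (n+1) → ℝ)) : Prop :=
  ∀ x ∈ M, ∃ B : Set (Fin (n+1) → ℝ), IsOpenBox B ∧ x ∈ B ∧
    IsHomeoOn (projLast n) (B ∩ M) (projLast n '' B ∩ projLast n '' M)

/-- A topological submanifold of ℝ^k of dimension d (charted by homeomorphisms onto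
open subsets of ℝ^d). -/
def IsTopSubmanifold {k : ℕ} (V : Set (Fin k → ℝ)) (d : ℕ) : Prop :=
  ∀ x ∈ V, ∃ U : Set (Fin k → ℝ), IsOpen U ∧ x ∈ U ∧
    ∃ W : Set (Fin d → ℝ), IsOpen W ∧
      ∃ φ : (Fin k → ℝ) → (Fin d → ℝ), IsHomeoOn φ (U ∩ V) W

theorem stmt_0 {n d : ℕ} (V : Set (Fin n → ℝ)) (hVman : IsTopSubmanifold V d)
    (hVconn : IsConnected V)
    (f₁ f₂ : (Fin n → ℝ) → ℝ) (hf₁ : ContinuousOn f₁ V) (hf₂ : ContinuousOn f₂ V)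
    (hlt : ∀ x ∈ V, f₁ x < f₂ x)
    (X : Set (Fin (n+1) → ℝ)) (hX : IsConnected X)
    (hsub : projLast n '' X ⊆ V) (hproper : projLast n '' X ≠ V)
    (hopen : ∃ O : Set (Fin n → ℝ), IsOpen O ∧ projLast n '' X = O ∩ V)
    (hband : ∀ x ∈ X, f₁ (projLast n x) < x (Fin.last n) ∧ x (Fin.last n) < f₂ (projLast n x)) :
    ((closure (projLast n '' X) \ (projLast n '' X)) ∩ V).Nonempty ∧
      ∀ a ∈ (closure (projLast n '' X) \ (projLast n '' X)) ∩ V,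
        ∃ y ∈ closure X \ X, projLast n y = a ∧
          f₁ a ≤ y (Fin.last n) ∧ y (Fin.last n) ≤ f₂ a := by
  have hπcont : Continuous (projLast n) := continuous_pi fun i => continuous_apply _
  constructor
  · -- Part 1: the frontier of π(X) meets V
    obtain ⟨O, hO, hOV⟩ := hopen
    by_contra h
    rw [Set.not_nonempty_iff_eq_empty] at h
    have hclosed : closure (projLast n '' X) ∩ V ⊆ projLast n '' X := by
      intro v hv
      by_contra hvS
      have : v ∈ (closure (projLast n '' X) \ (projLast n '' X)) ∩ V :=
        ⟨⟨hv.1, hvS⟩, hv.2⟩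
      simp [h] at this
    have hSne : (projLast n '' X).Nonempty := hX.nonempty.image _
    obtain ⟨v1, hv1V, hv1S⟩ : ∃ v, v ∈ V ∧ v ∉ projLast n '' X := by
      by_contra hc; push_neg at hc
      exact hproper (Subset.antisymm hsub fun v hv => hc v hv)
    have hVpre := hVconn.isPreconnected
    have hcover : V ⊆ O ∪ (closure (projLast n '' X))ᶜ := by
      intro v hv
      by_cases hvc : v ∈ closure (projLast n '' X)
      · left
        have : v ∈ projLast n '' X := hclosed ⟨hvc, hv⟩
        rw [hOV] at this; exact this.1
      · right; exact hvc
    have hne1 : (V ∩ O).Nonempty := by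
      obtain ⟨v, hv⟩ := hSne
      exact ⟨v, hsub hv, (hOV ▸ hv).1⟩
    have hne2 : (V ∩ (closure (projLast n '' X))ᶜ).Nonempty := by
      refine ⟨v1, hv1V, fun hc => hv1S (hclosed ⟨hc, hv1V⟩)⟩
    obtain ⟨p, hpV, hpO, hpc⟩ :=
      hVpre O (closure (projLast n '' X))ᶜ hO isClosed_closure.isOpen_compl hcover hne1 hne2
    exact hpc (subset_closure (hOV ▸ ⟨hpO, hpV⟩ : p ∈ projLast n '' X))
  · -- Part 2
    intro a ha
    obtain ⟨⟨hacl, haS⟩, haV⟩ := ha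
    set F := Filter.comap (projLast n) (𝓝 a) ⊓ Filter.principal X with hFdef
    have hFne : F.NeBot := by
      rw [Filter.inf_principal_neBot_iff]
      intro s hs
      obtain ⟨U, hU, hUs⟩ := hs
      obtain ⟨v, hvU, hvim⟩ := mem_closure_iff_nhds.mp hacl U hU
      obtain ⟨x, hxX, hxv⟩ := hvim
      exact ⟨x, hUs (by simpa [hxv] using hvU), hxX⟩
    -- Band membership in F
    have key : ∀ ε : ℝ, 0 < ε →
        {y : Fin (n+1) → ℝ | y (Fin.last n) ∈ Icc (f₁ a - ε) (f₂ a + ε)} ∈ F := by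
      intro ε hε
      have h1 : ∀ᶠ v in 𝓝[V] a, f₁ v ∈ Ioo (f₁ a - ε) (f₁ a + ε) :=
        (hf₁ a haV) (Ioo_mem_nhds (by linarith) (by linarith))
      have h2 : ∀ᶠ v in 𝓝[V] a, f₂ v ∈ Ioo (f₂ a - ε) (f₂ a + ε) :=
        (hf₂ a haV) (Ioo_mem_nhds (by linarith) (by linarith))
      have h3 := h1.and h2
      rw [eventually_nhdsWithin_iff] at h3
      obtain ⟨U, hUsub, hUopen, haU⟩ := eventually_nhds_iff.mp h3
      have hUF : projLast n ⁻¹' U ∈ F :=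
        Filter.mem_inf_of_left (Filter.preimage_mem_comap (hUopen.mem_nhds haU))
      refine Filter.mem_of_superset (Filter.inter_mem hUF (Filter.mem_inf_of_right
        (Filter.mem_principal_self X))) ?_
      rintro x ⟨hxU, hxX⟩
      have hπxV : projLast n x ∈ V := hsub ⟨x, hxX, rfl⟩
      obtain ⟨hb1, hb2⟩ := hUsub _ hxU hπxV
      obtain ⟨hl, hr⟩ := hband x hxX
      exact ⟨by simp only [mem_Ioo] at hb1; linarith,
             by simp only [mem_Ioo] at hb2; linarith⟩
    -- Compact set containing F
    obtain ⟨r, hr, hrball⟩ : ∃ r > 0, Metric.closedBall a r ⊆ univ :=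
      ⟨1, one_pos, subset_univ _⟩
    set K : Set (Fin (n+1) → ℝ) := (projLast n ⁻¹' Metric.closedBall a r) ∩
      {y | y (Fin.last n) ∈ Icc (f₁ a - 1) (f₂ a + 1)} with hKdef
    have hKF : K ∈ F := by
      refine Filter.inter_mem ?_ (key 1 one_pos)
      exact Filter.mem_inf_of_left (Filter.preimage_mem_comap
        (Metric.closedBall_mem_nhds a hr))
    have hKclosed : IsClosed K := by
      refine IsClosed.inter (Metric.isClosed_closedBall.preimage hπcont) ?_
      exact isClosed_Icc.preimage (continuous_apply _)
    have hKcomp : IsCompact K := by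
      refine IsCompact.of_isClosed_subset
        (isCompact_univ_pi (fun i : Fin (n+1) =>
          isCompact_Icc (a := Fin.lastCases (f₁ a - 1) (fun j => a j - r) i)
            (b := Fin.lastCases (f₂ a + 1) (fun j => a j + r) i))) hKclosed ?_
      rintro y ⟨hy1, hy2⟩
      intro i _
      refine Fin.lastCases ?_ ?_ i
      · simpa using hy2
      · intro j
        simp only [Fin.lastCases_castSucc]
        have h := (dist_pi_le_iff hr.le).mp (Metric.mem_closedBall.mp hy1) j
        rw [Real.dist_eq, abs_sub_le_iff] at h
        simp only [projLast] at h
        exact ⟨by linarith [h.1, h.2], by linarith [h.1, h.2]⟩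
    obtain ⟨y, hyK, hy⟩ := hKcomp.exists_clusterPt (Filter.le_principal_iff.mpr hKF)
    have hyX : y ∈ closure X :=
      mem_closure_iff_clusterPt.mpr (hy.mono inf_le_right)
    have hπy : projLast n y = a := by
      have hcl : ClusterPt y (Filter.comap (projLast n) (𝓝 a)) := hy.mono inf_le_left
      have : ClusterPt (projLast n y) (𝓝 a) := by
        have hne := hcl.neBot
        have : Filter.map (projLast n) (𝓝 y ⊓ Filter.comap (projLast n) (𝓝 a)) ≤
            𝓝 (projLast n y) ⊓ 𝓝 a := by
          refine le_inf ?_ ?_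
          · exact (Filter.map_mono inf_le_left).trans (hπcont.continuousAt.tendsto)
          · exact (Filter.map_mono inf_le_right).trans Filter.map_comap_le
        exact Filter.neBot_of_le this
      have hne2 : (𝓝 (projLast n y) ⊓ 𝓝 a).NeBot := this.neBot
      exact eq_of_nhds_neBot hne2
    have hbound : ∀ ε : ℝ, 0 < ε →
        f₁ a - ε ≤ y (Fin.last n) ∧ y (Fin.last n) ≤ f₂ a + ε := by
      intro ε hε
      have hmem : y ∈ closure {y : Fin (n+1) → ℝ |
          y (Fin.last n) ∈ Icc (f₁ a - ε) (f₂ a + ε)} :=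
        mem_closure_iff_clusterPt.mpr (hy.mono (Filter.le_principal_iff.mpr (key ε hε)))
      have hC : IsClosed {y : Fin (n+1) → ℝ | y (Fin.last n) ∈ Icc (f₁ a - ε) (f₂ a + ε)} :=
        isClosed_Icc.preimage (continuous_apply _)
      have := hC.closure_eq ▸ hmem
      exact this
    have hynotX : y ∉ X := fun hyXmem => haS ⟨y, hyXmem, hπy⟩
    refine ⟨y, ⟨hyX, hynotX⟩, hπy, ?_, ?_⟩
    · have : ∀ ε : ℝ, 0 < ε → f₁ a ≤ y (Fin.last n) + ε := fun ε hε => by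
        linarith [(hbound ε hε).1]
      exact le_of_forall_pos_le_add this
    · have : ∀ ε : ℝ, 0 < ε → y (Fin.last n) ≤ f₂ a + ε := fun ε hε => (hbound ε hε).2
      exact le_of_forall_pos_le_add this
end

section
/- Let M ⊆ ℝ^n be pseudo-special with the property (†): for every connected component X of M, every sequence (a_m) in π(X) converging to some a ∈ π(M), and any choice b_m ∈ X with π(b_m) = a_m, the set {b_m} is bounded. Let X be a connected component of M such that the frontier of X does not meet π^{-1}(π(M)). If V is a connected component of π(M) containing π(X) and π(X) is open in V, then π(X) = V. -/
open Set Topology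

theorem stmt_15 {n : ℕ} (M : Set (Fin (n+1) → ℝ)) (hps : PseudoSpecial M)
    (hdag : ∀ y₀ ∈ M, ∀ a : ℕ → Fin n → ℝ,
      (∀ m, a m ∈ projLast n '' connectedComponentIn M y₀) →
      ∀ l ∈ projLast n '' M, Filter.Tendsto a Filter.atTop (nhds l) →
      ∀ b : ℕ → Fin (n+1) → ℝ,
        (∀ m, b m ∈ connectedComponentIn M y₀ ∧ projLast n (b m) = a m) →
        Bornology.IsBounded (Set.range b))
    (x₀ : Fin (n+1) → ℝ) (hx₀ : x₀ ∈ M)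
    (X : Set (Fin (n+1) → ℝ)) (hX : X = connectedComponentIn M x₀)
    (hfr : (closure X \ X) ∩ (projLast n ⁻¹' (projLast n '' M)) = ∅)
    (v : Fin n → ℝ) (hv : v ∈ projLast n '' M)
    (V : Set (Fin n → ℝ)) (hV : V = connectedComponentIn (projLast n '' M) v)
    (hXV : projLast n '' X ⊆ V)
    (hopen : ∃ O : Set (Fin n → ℝ), IsOpen O ∧ projLast n '' X = O ∩ V) :
    projLast n '' X = V := by
  obtain ⟨O, hO, hOV⟩ := hopen
  have hcont : Continuous (projLast n) :=
    continuous_pi (fun i => continuous_apply _)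
  have hXM : X ⊆ M := by rw [hX]; exact connectedComponentIn_subset _ _
  have hVM : V ⊆ projLast n '' M := by rw [hV]; exact connectedComponentIn_subset _ _
  -- key closedness claim
  have hclosed : closure (projLast n '' X) ∩ V ⊆ projLast n '' X := by
    rintro a ⟨hacl, haV⟩
    obtain ⟨α, hαmem, hαlim⟩ := mem_closure_iff_seq_limit.1 hacl
    choose b hbX hbπ using fun m => hαmem m
    have hbX' : ∀ m, b m ∈ connectedComponentIn M x₀ := fun m => hX ▸ hbX m
    have hbdd : Bornology.IsBounded (Set.range b) := by
      refine hdag x₀ hx₀ α (fun m => ?_) a (hVM haV) hαlim b (fun m => ⟨hbX' m, hbπ m⟩)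
      exact ⟨b m, hbX' m, hbπ m⟩
    obtain ⟨c, hc, φ, hφ, hlim⟩ :=
      tendsto_subseq_of_bounded hbdd (fun m => Set.mem_range_self m)
    have hccl : c ∈ closure X := by
      refine closure_mono ?_ hc
      rintro _ ⟨m, rfl⟩; exact hbX m
    have hπc : projLast n c = a := by
      have h1 : Filter.Tendsto (fun m => projLast n (b (φ m))) Filter.atTop
          (nhds (projLast n c)) := (hcont.tendsto c).comp hlim
      have h2 : Filter.Tendsto (fun m => projLast n (b (φ m))) Filter.atTop (nhds a) := by
        simpa [hbπ, Function.comp_def] using hαlim.comp hφ.tendsto_atTop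
      exact tendsto_nhds_unique h1 h2
    have hcX : c ∈ X := by
      by_contra hcX
      have : c ∈ (closure X \ X) ∩ (projLast n ⁻¹' (projLast n '' M)) :=
        ⟨⟨hccl, hcX⟩, by rw [Set.mem_preimage, hπc]; exact hVM haV⟩
      rw [hfr] at this; exact this
    exact ⟨c, hcX, hπc⟩
  -- nonempty
  have hne : (V ∩ O).Nonempty := by
    have hx₀X : x₀ ∈ X := by rw [hX]; exact mem_connectedComponentIn hx₀
    have : projLast n x₀ ∈ O ∩ V := hOV ▸ ⟨x₀, hx₀X, rfl⟩
    exact ⟨projLast n x₀, this.2, this.1⟩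
  have hpre : IsPreconnected V := by
    rw [hV]; exact (isPreconnected_connectedComponentIn)
  -- show V ⊆ closure (π '' X)
  have hVsub : V ⊆ closure (projLast n '' X) := by
    by_contra hcon
    have hne2 : (V ∩ (closure (projLast n '' X))ᶜ).Nonempty := by
      rw [Set.not_subset] at hcon
      obtain ⟨y, hyV, hy⟩ := hcon
      exact ⟨y, hyV, hy⟩
    have hunion : V ⊆ O ∪ (closure (projLast n '' X))ᶜ := by
      intro y hyV
      by_cases hy : y ∈ closure (projLast n '' X)
      · left
        have : y ∈ projLast n '' X := hclosed ⟨hy, hyV⟩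
        rw [hOV] at this; exact this.1
      · right; exact hy
    obtain ⟨z, hzV, hzO, hzc⟩ :=
      hpre O _ hO isClosed_closure.isOpen_compl hunion hne hne2
    exact hzc (subset_closure (hOV ▸ ⟨hzO, hzV⟩ : z ∈ projLast n '' X))
  refine subset_antisymm hXV (fun y hy => hclosed ⟨hVsub hy, hy⟩)
end
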